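/- Let G = (V,E) be a finite, simple, undirected, connected graph, and let Q, T ⊆ V be connected vertex sets with |Q| = |T| = n and Q ∩ T ≠ ∅. Let p be the number of vertices of a largest connected component of the induced subgraph G[Q ∩ T]. Then there exists a valid plan from Q to T with makespan at most n − p; in particular, with makespan at most n − 1. -/

import Mathlib

/-!
Grow a connected set `A ⊆ Q ∩ T`, starting from a largest component of `G[Q ∩ T]`, one vertex
of `T` at a time, keeping `A` inside the current configuration. Since `T` is connected, some
`t ∈ T \ A` is adjacent to `A`. If `t` is already occupied, `A` grows for free. Otherwise
`Q ∪ {t}` is connected, and a vertex `ℓ ∈ Q \ A` farthest from a fixed vertex of `A` in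
`G[Q ∪ {t}]` is not a cut vertex; shifting the agents on a path from `ℓ` to `t` one position
forward reaches the connected configuration `Q ∪ {t} \ {ℓ}` in one step. Each vertex of `T \ A`
thus costs at most one step, so `|T| - p = n - p` steps suffice.
-/

open SimpleGraph

variable {V : Type*}

/-- A vertex set `Q` is connected if the subgraph of `G` induced by `Q` is connected. -/
def ConnSet (G : SimpleGraph V) (Q : Finset V) : Prop :=
  (G.induce (Q : Set V)).Connected

/-- `Q'` is reachable from `Q` in one step: there is a bijection `φ` between the two
vertex sets moving every agent to an adjacent vertex or keeping it in place,
with no swap conflict. -/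
def OneStep (G : SimpleGraph V) (Q Q' : Finset V) : Prop :=
  ∃ φ : {x // x ∈ Q} ≃ {x // x ∈ Q'},
    (∀ v : {x // x ∈ Q}, ((φ v : V) = (v : V)) ∨ G.Adj (v : V) ((φ v : V))) ∧
    ∀ u v : {x // x ∈ Q}, (u : V) ≠ (v : V) →
      ¬(((φ u : V) = (v : V)) ∧ ((φ v : V) = (u : V)))

/-- A valid plan from `S` to `T` with makespan `tstar`: a sequence of vertex sets,
each of size `n` and connected, starting at `S`, ending at `T`, with each
consecutive pair one-step reachable. -/
def ValidPlan (G : SimpleGraph V) (n : ℕ) (S T : Finset V) (tstar : ℕ)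
    (P : ℕ → Finset V) : Prop :=
  P 0 = S ∧ P tstar = T ∧
  (∀ k ≤ tstar, (P k).card = n ∧ ConnSet G (P k)) ∧
  ∀ k < tstar, OneStep G (P k) (P (k + 1))

/-- The number of vertices of a largest connected component of the induced
subgraph `G[W]`. -/
noncomputable def maxCompCard (G : SimpleGraph V) (W : Finset V) : ℕ :=
  sSup (Set.range
    fun C : (G.induce (W : Set V)).ConnectedComponent => Nat.card C.supp)

section

variable {G : SimpleGraph V} {A Q T : Finset V} {a t : V}

lemma SimpleGraph.Walk.IsPath.formPerm_support_getVert [DecidableEq V] {u v : V}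
    {p : G.Walk u v} (hp : p.IsPath) {i : ℕ} (hi : i < p.length) :
    p.support.formPerm (p.getVert i) = p.getVert (i + 1) := by
  rw [p.getVert_eq_support_getElem hi.le, p.getVert_eq_support_getElem hi,
    List.formPerm_apply_lt_getElem _ hp.support_nodup]

lemma SimpleGraph.Walk.IsPath.exists_getVert_formPerm_support [DecidableEq V] {u v w : V}
    {p : G.Walk u v} (hp : p.IsPath) (hw : w ∈ p.support) (hwv : w ≠ v) :
    ∃ i < p.length, p.getVert i = w ∧ p.support.formPerm w = p.getVert (i + 1) := by
  obtain ⟨i, rfl, hi⟩ := Walk.mem_support_iff_exists_getVert.1 hw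
  have hi' : i < p.length := hi.lt_of_ne fun h => hwv (h ▸ p.getVert_length)
  exact ⟨i, hi', rfl, hp.formPerm_support_getVert hi'⟩

lemma SimpleGraph.Walk.formPerm_support_end [DecidableEq V] {u v : V} (p : G.Walk u v) :
    p.support.formPerm v = u := by
  have h := List.formPerm_apply_getLast u p.support.tail
  simpa only [p.cons_tail_support, p.getLast_support] using h

lemma OneStep.of_perm {Q Q' : Finset V} (σ : Equiv.Perm V) (hσ : ∀ v, v ∈ Q ↔ σ v ∈ Q')
    (hmove : ∀ v ∈ Q, σ v = v ∨ G.Adj v (σ v))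
    (hswap : ∀ u ∈ Q, ∀ v ∈ Q, σ u = v → σ v = u → u = v) : OneStep G Q Q' :=
  ⟨σ.subtypeEquiv hσ, fun v => hmove v v.2,
    fun u v huv h => huv (hswap u u.2 v v.2 h.1 h.2)⟩

lemma oneStep_insert_erase_of_isPath [DecidableEq V] {ℓ : V} (hℓ : ℓ ∈ Q) (ht : t ∉ Q)
    {p : G.Walk ℓ t} (hp : p.IsPath) (hpQ : ∀ x ∈ p.support, x ∈ insert t Q) :
    OneStep G Q (insert t (Q.erase ℓ)) := by
  have hℓt : ℓ ≠ t := fun h => ht (h ▸ hℓ)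
  have hinj {i j : ℕ} (hi : i ≤ p.length) (hj : j ≤ p.length) (h : p.getVert i = p.getVert j) :
      i = j := hp.getVert_injOn hi hj h
  -- every vertex of the path moves to its successor; only `t ∉ Q` wraps around to `ℓ`
  refine OneStep.of_perm p.support.formPerm (fun v => ?_) (fun v hv => ?_)
    (fun u hu v hv huv hvu => ?_)
  · by_cases hvp : v ∈ p.support
    · by_cases hvt : v = t
      · subst hvt
        simp [p.formPerm_support_end, ht, hℓt]
      obtain ⟨i, hi, rfl, hσv⟩ := hp.exists_getVert_formPerm_support hvp hvt
      have hne : p.getVert (i + 1) ≠ ℓ := fun h => by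
        have := hinj (i := i + 1) (j := 0) hi (Nat.zero_le _) (by simpa using h)
        omega
      have hmem := hpQ _ (p.getVert_mem_support (i + 1))
      have hmem' := hpQ _ hvp
      simp only [Finset.mem_insert, hvt, false_or] at hmem'
      simp only [hσv, Finset.mem_insert, Finset.mem_erase] at hmem ⊢
      tauto
    · have hvℓ : v ≠ ℓ := fun h => hvp (h ▸ p.start_mem_support)
      have hvt : v ≠ t := fun h => hvp (h ▸ p.end_mem_support)
      simp [List.formPerm_apply_of_notMem hvp, hvℓ, hvt]
  · by_cases hvp : v ∈ p.support
    · obtain ⟨i, hi, rfl, hσv⟩ := hp.exists_getVert_formPerm_support hvp fun h => ht (h ▸ hv)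
      exact .inr (hσv ▸ p.adj_getVert_succ hi)
    · exact .inl (List.formPerm_apply_of_notMem hvp)
  · by_cases hup : u ∈ p.support
    · obtain ⟨i, hi, rfl, hσu⟩ := hp.exists_getVert_formPerm_support hup fun h => ht (h ▸ hu)
      obtain rfl : v = p.getVert (i + 1) := huv.symm.trans hσu
      obtain ⟨j, hj, hji, hσv⟩ :=
        hp.exists_getVert_formPerm_support (p.getVert_mem_support _) fun h => ht (h ▸ hv)
      have h1 := hinj hj.le hi hji
      have h2 := hinj hj hi.le (hσv.symm.trans hvu)
      omega
    · exact huv ▸ (List.formPerm_apply_of_notMem hup).symm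

lemma ConnSet.nonempty (hA : ConnSet G A) : A.Nonempty :=
  let ⟨⟨x, hx⟩⟩ := Connected.nonempty hA
  ⟨x, hx⟩

lemma ConnSet.exists_isPath (hA : ConnSet G A) {u v : V} (hu : u ∈ A) (hv : v ∈ A) :
    ∃ p : G.Walk u v, p.IsPath ∧ ∀ x ∈ p.support, x ∈ A := by
  obtain ⟨q, hq⟩ := (Connected.preconnected hA ⟨u, hu⟩ ⟨v, hv⟩).exists_isPath
  let f := Embedding.induce (G := G) (A : Set V)
  have hq' : ∀ x ∈ (q.map f.toHom).support, x ∈ A := by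
    simp only [Walk.support_map, List.mem_map]
    rintro _ ⟨y, -, rfl⟩
    exact y.2
  exact ⟨_, hq.map f.injective, hq'⟩

lemma ConnSet.insert_of_adj [DecidableEq V] (hA : ConnSet G A) (ha : a ∈ A)
    (hat : G.Adj a t) : ConnSet G (insert t A) := by
  have h := induce_union_connected (Connected.preconnected hA)
    (induce_pair_connected_of_adj hat).preconnected ⟨a, ha, by simp⟩
  have hset : ((insert t A : Finset V) : Set V) = ↑A ∪ {a, t} := by
    ext x
    by_cases hx : x = a <;> simp [hx, ha, or_comm]
  rwa [ConnSet, hset]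

lemma ConnSet.exists_adj_of_ssubset (hT : ConnSet G T) (hA : A.Nonempty) (hAT : A ⊂ T) :
    ∃ a ∈ A, ∃ t ∈ T, t ∉ A ∧ G.Adj a t := by
  obtain ⟨a₀, ha₀⟩ := hA
  obtain ⟨t₀, ht₀T, ht₀A⟩ := Finset.exists_of_ssubset hAT
  obtain ⟨p⟩ := Connected.preconnected hT ⟨a₀, hAT.subset ha₀⟩ ⟨t₀, ht₀T⟩
  obtain ⟨d, -, hd, hd'⟩ := p.exists_boundary_dart {x | (x : V) ∈ A} ha₀ ht₀A
  exact ⟨d.fst, hd, d.snd, d.snd.2, hd', d.adj⟩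

lemma ConnSet.exists_erase_of_ssubset [DecidableEq V] (hQ : ConnSet G Q) (hA : ConnSet G A)
    (hAQ : A ⊂ Q) : ∃ ℓ ∈ Q, ℓ ∉ A ∧ ConnSet G (Q.erase ℓ) := by
  obtain ⟨r, hr⟩ := hA.nonempty
  let r' : (Q : Set V) := ⟨r, hAQ.subset hr⟩
  have hfar : ({x : (Q : Set V) | (x : V) ∉ A} : Finset _).Nonempty := by
    obtain ⟨x, hxQ, hxA⟩ := Finset.exists_of_ssubset hAQ
    exact ⟨⟨x, hxQ⟩, by simpa using hxA⟩
  -- shortest paths to `r` in `G[Q]` avoid a vertex outside `A` farthest from `r`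
  obtain ⟨ℓ, hℓA, hℓmax⟩ := Finset.exists_max_image _ ((G.induce (Q : Set V)).dist r') hfar
  replace hℓA : (ℓ : V) ∉ A := by simpa using hℓA
  have hrℓ : r ≠ ℓ := fun h => hℓA (h ▸ hr)
  refine ⟨ℓ, ℓ.2, hℓA, induce_connected_of_patches r (by simp [hrℓ, hAQ.subset hr]) ?_⟩
  intro v hv
  rw [Finset.mem_coe, Finset.mem_erase] at hv
  by_cases hvA : v ∈ A
  · refine ⟨A, fun x hx => ?_, hr, hvA, Connected.preconnected hA _ _⟩
    exact Finset.mem_erase.2 ⟨fun h => hℓA (h ▸ hx), hAQ.subset hx⟩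
  obtain ⟨p, hp⟩ := (Connected.preconnected hQ r' ⟨v, hv.2⟩).exists_walk_length_eq_dist
  have hℓp : ℓ ∉ p.support := by
    intro hℓp
    have hlt := p.length_takeUntil_lt_length hℓp (fun h => hv.1 (congrArg Subtype.val h).symm)
    have hle := SimpleGraph.dist_le (p.takeUntil ℓ hℓp)
    have hmax := hℓmax ⟨v, hv.2⟩ (by simpa using hvA)
    omega
  let q := p.map (Embedding.induce (G := G) (Q : Set V)).toHom
  have hq : ∀ x ∈ q.support, x ∈ ((Q.erase ℓ : Finset V) : Set V) := by
    simp only [q, Walk.support_map, List.mem_map, Finset.coe_erase]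
    rintro _ ⟨y, hy, rfl⟩
    exact ⟨y.2, fun h => hℓp (Subtype.ext h ▸ hy)⟩
  exact ⟨_, hq, q.start_mem_support, q.end_mem_support,
    q.connected_induce_support.preconnected _ _⟩

lemma ConnSet.exists_oneStep_insert_subset [DecidableEq V] (hQ : ConnSet G Q)
    (hA : ConnSet G A) (hAQ : A ⊂ Q) (ha : a ∈ A) (hat : G.Adj a t) (ht : t ∉ Q) :
    ∃ Q₁, OneStep G Q Q₁ ∧ ConnSet G Q₁ ∧ Q₁.card = Q.card ∧ insert t A ⊆ Q₁ := by
  have hQt := hQ.insert_of_adj (hAQ.subset ha) hat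
  have hAQt : insert t A ⊂ insert t Q := by
    obtain ⟨x, hxQ, hxA⟩ := Finset.exists_of_ssubset hAQ
    refine (Finset.ssubset_iff_of_subset (Finset.insert_subset_insert t hAQ.subset)).2
      ⟨x, Finset.mem_insert_of_mem hxQ, ?_⟩
    simpa [hxA] using fun h : x = t => ht (h ▸ hxQ)
  obtain ⟨ℓ, hℓ, hℓA, hconn⟩ := hQt.exists_erase_of_ssubset (hA.insert_of_adj ha hat) hAQt
  have hℓt : ℓ ≠ t := fun h => hℓA (h ▸ Finset.mem_insert_self t A)
  have hℓQ : ℓ ∈ Q := (Finset.mem_insert.1 hℓ).resolve_left hℓt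
  obtain ⟨p, hp, hpQ⟩ := hQt.exists_isPath hℓ (Finset.mem_insert_self t Q)
  rw [Finset.erase_insert_of_ne hℓt.symm] at hconn
  refine ⟨_, oneStep_insert_erase_of_isPath hℓQ ht hp hpQ, hconn, ?_, ?_⟩
  · rw [Finset.card_insert_of_notMem (fun h => ht (Finset.mem_of_mem_erase h)),
      Finset.card_erase_add_one hℓQ]
  · rw [← Finset.erase_insert_of_ne hℓt.symm]
    exact fun x hx => Finset.mem_erase.2 ⟨fun h => hℓA (h ▸ hx), hAQt.subset hx⟩

lemma ValidPlan.refl {n : ℕ} (hQ : ConnSet G Q) (hQn : Q.card = n) :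
    ValidPlan G n Q Q 0 fun _ => Q :=
  ⟨rfl, rfl, fun _ _ => ⟨hQn, hQ⟩, fun _ h => absurd h (Nat.not_lt_zero _)⟩

lemma ValidPlan.cons {n k : ℕ} {Q₁ : Finset V} {P : ℕ → Finset V} (hQ : ConnSet G Q)
    (hQn : Q.card = n) (hstep : OneStep G Q Q₁) (hP : ValidPlan G n Q₁ T k P) :
    ValidPlan G n Q T (k + 1) fun | 0 => Q | i + 1 => P i := by
  obtain ⟨hP0, hPT, hPconn, hPstep⟩ := hP
  refine ⟨rfl, hPT, fun i hi => ?_, fun i hi => ?_⟩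
  · cases i with
    | zero => exact ⟨hQn, hQ⟩
    | succ i => exact hPconn i (by omega)
  · cases i with
    | zero => exact show OneStep G Q (P 0) from hP0 ▸ hstep
    | succ i => exact hPstep i (by omega)

theorem exists_validPlan_of_subset [DecidableEq V] {n : ℕ} {Q A : Finset V} (hT : ConnSet G T)
    (hTn : T.card = n) (hQ : ConnSet G Q) (hQn : Q.card = n) (hA : ConnSet G A) (hAQ : A ⊆ Q)
    (hAT : A ⊆ T) :
    ∃ k ≤ (T \ A).card, ∃ P, ValidPlan G n Q T k P := by
  by_cases hAT' : A = T
  · subst hAT'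
    obtain rfl : Q = A := (Finset.eq_of_subset_of_card_le hAQ (hTn ▸ hQn.le)).symm
    exact ⟨0, Nat.zero_le _, _, .refl hQ hQn⟩
  have hAT' : A ⊂ T := hAT.ssubset_of_ne hAT'
  obtain ⟨a, ha, t, htT, htA, hat⟩ := hT.exists_adj_of_ssubset hA.nonempty hAT'
  have hdec : (T \ insert t A).card < (T \ A).card := by
    rw [Finset.sdiff_insert]
    exact Finset.card_erase_lt_of_mem (Finset.mem_sdiff.2 ⟨htT, htA⟩)
  have hAt := hA.insert_of_adj ha hat
  have hAtT := Finset.insert_subset htT hAT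
  by_cases htQ : t ∈ Q
  · obtain ⟨k, hk, P, hP⟩ :=
      exists_validPlan_of_subset hT hTn hQ hQn hAt (Finset.insert_subset htQ hAQ) hAtT
    exact ⟨k, by omega, P, hP⟩
  have hAQ' : A ⊂ Q := hAQ.ssubset_of_ne fun h =>
    (Finset.card_lt_card hAT').ne (by rw [hTn, ← hQn, h])
  obtain ⟨Q₁, hstep, hQ₁, hQ₁n, hAQ₁⟩ := hQ.exists_oneStep_insert_subset hA hAQ' ha hat htQ
  obtain ⟨k, hk, P, hP⟩ :=
    exists_validPlan_of_subset hT hTn hQ₁ (hQ₁n.trans hQn) hAt hAQ₁ hAtT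
  exact ⟨k + 1, by omega, _, hP.cons hQ hQn hstep⟩
termination_by (T \ A).card

lemma exists_connSet_card_eq_maxCompCard (G : SimpleGraph V) {W : Finset V} (hW : W.Nonempty) :
    ∃ C ⊆ W, ConnSet G C ∧ C.card = maxCompCard G W := by
  set H := G.induce (W : Set V)
  obtain ⟨w, hw⟩ := hW
  let size : H.ConnectedComponent → ℕ := fun K => Nat.card K.supp
  obtain ⟨K, hK⟩ := Nat.sSup_mem (s := Set.range size)
    ⟨_, H.connectedComponentMk ⟨w, hw⟩, rfl⟩ (Set.finite_range size).bddAbove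
  have hfin : (Subtype.val '' K.supp).Finite := K.supp.toFinite.image _
  refine ⟨hfin.toFinset, fun x hx => ?_, ?_, ?_⟩
  · obtain ⟨y, -, rfl⟩ := hfin.mem_toFinset.1 hx
    exact y.2
  · let f : H.induce K.supp →g G.induce (Subtype.val '' K.supp) :=
      induceHom (Embedding.induce (W : Set V)).toHom (Set.mapsTo_image _ _)
    have hf : Function.Surjective f := by
      rintro ⟨_, y, hy, rfl⟩
      exact ⟨⟨y, hy⟩, rfl⟩
    rw [ConnSet, hfin.coe_toFinset]
    exact (ConnectedComponent.maximal_connected_induce_supp K).prop.map f hf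
  · rw [← Set.ncard_eq_toFinset_card _ hfin,
      Set.ncard_image_of_injective _ Subtype.val_injective, ← Nat.card_coe_set_eq]
    exact hK

end

theorem stmt10_general [DecidableEq V] (G : SimpleGraph V)
    (n : ℕ) (Q T : Finset V)
    (hQconn : ConnSet G Q) (hTconn : ConnSet G T)
    (hQcard : Q.card = n) (hTcard : T.card = n)
    (hint : (Q ∩ T).Nonempty) :
    ∃ (tstar : ℕ) (P : ℕ → Finset V), ValidPlan G n Q T tstar P ∧
      tstar ≤ n - maxCompCard G (Q ∩ T) ∧ tstar ≤ n - 1 := by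
  obtain ⟨C, hCQT, hC, hCcard⟩ := exists_connSet_card_eq_maxCompCard G hint
  have hCT : C ⊆ T := hCQT.trans Finset.inter_subset_right
  obtain ⟨k, hk, P, hP⟩ := exists_validPlan_of_subset hTconn hTcard hQconn hQcard hC
    (hCQT.trans Finset.inter_subset_left) hCT
  have hk' : k ≤ n - maxCompCard G (Q ∩ T) := by
    rwa [Finset.card_sdiff_of_subset hCT, hTcard, hCcard] at hk
  have hp : 0 < maxCompCard G (Q ∩ T) := hCcard ▸ hC.nonempty.card_pos
  exact ⟨k, P, hP, hk', by omega⟩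

/-- If `Q` and `T` are connected vertex sets of size `n` with `Q ∩ T ≠ ∅`, and
`p` is the size of a largest connected component of `G[Q ∩ T]`, then there is a
valid plan from `Q` to `T` with makespan at most `n - p`, in particular at most
`n - 1`. -/
theorem stmt10 [Fintype V] [DecidableEq V] (G : SimpleGraph V) (hG : G.Connected)
    (n : ℕ) (Q T : Finset V)
    (hQconn : ConnSet G Q) (hTconn : ConnSet G T)
    (hQcard : Q.card = n) (hTcard : T.card = n)
    (hint : (Q ∩ T).Nonempty) :
    ∃ (tstar : ℕ) (P : ℕ → Finset V), ValidPlan G n Q T tstar P ∧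
      tstar ≤ n - maxCompCard G (Q ∩ T) ∧ tstar ≤ n - 1 :=
  stmt10_general G n Q T hQconn hTconn hQcard hTcard hint
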